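/- Let E be a set of jobs of an m-machine JIT flow-shop instance that admits a JIT schedule in which, for each machine i, the jobs of E are processed in the order σ_i. Then E also admits a JIT schedule with the same processing orders σ_1,…,σ_m in which, on each of the machines M_1,…,M_{m−1}, every job starts as soon as possible: the first job of σ_1 starts on M_1 at time 0, each subsequent job of σ_1 starts on M_1 at the completion time of its predecessor on M_1, and for 2 ≤ i ≤ m−1 the j-th job of σ_i starts on M_i at the maximum of the completion time of the (j−1)-st job of σ_i on M_i and the completion time of the j-th job of σ_i on M_{i−1}. -/

import Mathlib

open Finset

/-- A just-in-time flow-shop instance on `m` machines with jobs of type `J`: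
`p i j` is the (positive integer) processing time of job `j` on machine `i`,
`d j` its positive integer due date and `w j` its positive integer weight. -/
structure JITInstance (m : ℕ) (J : Type) where
  p : Fin m → J → ℕ
  d : J → ℕ
  w : J → ℕ
  p_pos : ∀ i j, 0 < p i j
  d_pos : ∀ j, 0 < d j
  w_pos : ∀ j, 0 < w j

/-- `S` is a JIT schedule of the job set `E`: on every machine the processing
intervals `(S i j, S i j + p i j]` of distinct jobs of `E` are pairwise disjoint,
each job's operation on machine `i+1` starts no earlier than its completion on
machine `i`, and every job of `E` completes on the last machine exactly at its
due date.  (Start times are nonnegative automatically, being naturals.) -/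
def IsJITSchedule {m : ℕ} {J : Type} (I : JITInstance m J)
    (E : Finset J) (S : Fin m → J → ℕ) : Prop :=
  (∀ i : Fin m, ∀ j ∈ E, ∀ j' ∈ E, j ≠ j' →
      S i j + I.p i j ≤ S i j' ∨ S i j' + I.p i j' ≤ S i j) ∧
  (∀ j ∈ E, ∀ i i' : Fin m, i'.val = i.val + 1 →
      S i j + I.p i j ≤ S i' j) ∧
  (∀ j ∈ E, ∀ i : Fin m, i.val = m - 1 →
      S i j + I.p i j = I.d j)

/-- A job set is feasible if it admits a JIT schedule. -/
def Feasible {m : ℕ} {J : Type} (I : JITInstance m J) (E : Finset J) : Prop :=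
  ∃ S : Fin m → J → ℕ, IsJITSchedule I E S

/-!
Machine by machine, restart every job as early as its completion on the previous machine and the
completion of its predecessor (in the given order) on the current machine allow. Induction over
the machines, and along the order on each machine, shows that no job starts later than before, so
the last machine can keep its original, due-date-tight start times. Since processing times are
positive, the earliest-start times keep the given order on every machine and never overlap.
-/

section SingleMachine

variable {J α : Type*} [LinearOrder α] {E : Finset J} {p r : J → ℕ} {key : J → α}

theorem card_filter_lt_lt_of_mem_filter_lt {j j' : J} (h : j' ∈ E.filter fun x => key x < key j) :
    (E.filter fun x => key x < key j').card < (E.filter fun x => key x < key j).card := by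
  refine card_lt_card
    ((ssubset_iff_of_subset ?_).mpr ⟨j', h, fun h' => (mem_filter.mp h').2.false⟩)
  intro x hx
  rw [mem_filter] at hx ⊢
  exact ⟨hx.1, hx.2.trans (mem_filter.mp h).2⟩

variable (E p r key) in
/-- Earliest start times on a single machine that processes the jobs of `E` in increasing order
of `key`, job `j` being available from its release time `r j`. -/
noncomputable def asap (j : J) : ℕ :=
  max (r j) ((E.filter fun j' => key j' < key j).attach.sup fun j' => asap j'.1 + p j'.1)
termination_by (E.filter fun j' => key j' < key j).card
decreasing_by exact card_filter_lt_lt_of_mem_filter_lt j'.2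

theorem asap_eq (j : J) :
    asap E p r key j =
      max (r j) ((E.filter fun j' => key j' < key j).sup fun j' => asap E p r key j' + p j') := by
  rw [asap, sup_attach (E.filter fun j' => key j' < key j) fun j' => asap E p r key j' + p j']

theorem le_asap (j : J) : r j ≤ asap E p r key j := by
  rw [asap_eq]
  exact le_max_left _ _

theorem asap_add_le_asap {j j' : J} (hj' : j' ∈ E) (hlt : key j' < key j) :
    asap E p r key j' + p j' ≤ asap E p r key j := by
  rw [asap_eq (j := j)]
  exact le_max_of_le_right
    (le_sup (f := fun j' => asap E p r key j' + p j') (mem_filter.mpr ⟨hj', hlt⟩))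

theorem asap_le {g : J → ℕ} (hr : ∀ j ∈ E, r j ≤ g j)
    (hg : ∀ j ∈ E, ∀ j' ∈ E, key j' < key j → g j' + p j' ≤ g j)
    {j : J} (hj : j ∈ E) :
    asap E p r key j ≤ g j := by
  rw [asap_eq]
  refine max_le (hr j hj) (Finset.sup_le fun j' hj' => ?_)
  obtain ⟨hj'E, hlt⟩ := mem_filter.mp hj'
  exact (Nat.add_le_add_right (asap_le hr hg hj'E) _).trans (hg j hj j' hj'E hlt)
termination_by (E.filter fun j' => key j' < key j).card
decreasing_by exact card_filter_lt_lt_of_mem_filter_lt hj'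

end SingleMachine

section FlowShop

variable {m : ℕ} {J α : Type*} [LinearOrder α] {E : Finset J} {p : Fin m → J → ℕ}
  {key : Fin m → J → α}

variable (E p key) in
noncomputable def asapFlow (i : Fin m) : J → ℕ :=
  asap E (p i) (fun j => if h : i.val = 0 then 0 else
      asapFlow ⟨i.val - 1, by omega⟩ j + p ⟨i.val - 1, by omega⟩ j) (key i)
termination_by i.val

theorem asapFlow_eq_asap (i : Fin m) :
    asapFlow E p key i =
      asap E (p i) (fun j => if i.val = 0 then 0
        else asapFlow E p key ⟨i.val - 1, lt_of_le_of_lt (Nat.sub_le _ _) i.isLt⟩ j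
          + p ⟨i.val - 1, lt_of_le_of_lt (Nat.sub_le _ _) i.isLt⟩ j) (key i) := by
  rw [asapFlow]
  rfl

theorem asapFlow_eq (i : Fin m) (j : J) :
    asapFlow E p key i j =
      max (if i.val = 0 then 0
           else asapFlow E p key ⟨i.val - 1, lt_of_le_of_lt (Nat.sub_le _ _) i.isLt⟩ j
             + p ⟨i.val - 1, lt_of_le_of_lt (Nat.sub_le _ _) i.isLt⟩ j)
        ((E.filter fun j' => key i j' < key i j).sup fun j' => asapFlow E p key i j' + p i j') := by
  conv_lhs => rw [asapFlow_eq_asap, asap_eq, ← asapFlow_eq_asap]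

theorem asapFlow_add_le_asapFlow (i : Fin m) {j j' : J} (hj' : j' ∈ E)
    (hlt : key i j' < key i j) :
    asapFlow E p key i j' + p i j' ≤ asapFlow E p key i j := by
  rw [asapFlow_eq_asap]
  exact asap_add_le_asap hj' hlt

theorem asapFlow_add_le_asapFlow_succ {i i' : Fin m} (h : i'.val = i.val + 1) (j : J) :
    asapFlow E p key i j + p i j ≤ asapFlow E p key i' j := by
  obtain rfl : i = ⟨i'.val - 1, lt_of_le_of_lt (Nat.sub_le _ _) i'.isLt⟩ :=
    Fin.ext (by simp [h])
  rw [asapFlow_eq_asap (E := E) (p := p) (key := key) i']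
  refine le_trans (le_of_eq ?_) (le_asap j)
  rw [if_neg (by omega)]

theorem asapFlow_le {S : Fin m → J → ℕ}
    (hprec : ∀ j ∈ E, ∀ i i' : Fin m, i'.val = i.val + 1 → S i j + p i j ≤ S i' j)
    (horder : ∀ i, ∀ j ∈ E, ∀ j' ∈ E, S i j' < S i j → S i j' + p i j' ≤ S i j)
    (i : Fin m) {j : J} (hj : j ∈ E) :
    asapFlow E p S i j ≤ S i j := by
  rw [asapFlow_eq_asap]
  refine asap_le (fun x hx => ?_) (horder i) hj
  split_ifs with h0
  · exact Nat.zero_le _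
  · exact (Nat.add_le_add_right (asapFlow_le hprec horder _ hx) _).trans
      (hprec x hx _ i (by dsimp only; omega))
termination_by i.val

end FlowShop

section JIT

variable {m : ℕ} {J : Type} {I : JITInstance m J} {E : Finset J} {S : Fin m → J → ℕ}

theorem IsJITSchedule.add_le_of_lt (hS : IsJITSchedule I E S) (i : Fin m) {j j' : J}
    (hj : j ∈ E) (hj' : j' ∈ E) (hlt : S i j < S i j') : S i j + I.p i j ≤ S i j' := by
  rcases hS.1 i j hj j' hj' (by rintro rfl; exact hlt.false) with h | h
  · exact h
  · have := I.p_pos i j'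
    omega

theorem IsJITSchedule.injOn (hS : IsJITSchedule I E S) (i : Fin m) : Set.InjOn (S i) E := by
  intro j hj j' hj' heq
  by_contra hne
  have := I.p_pos i j
  have := I.p_pos i j'
  rcases hS.1 i j hj j' hj' hne with h | h <;> omega

variable (I E S) in
noncomputable def asapSchedule (i : Fin m) : J → ℕ :=
  if i.val + 1 < m then asapFlow E I.p S i else S i

theorem asapSchedule_of_lt {i : Fin m} (hi : i.val + 1 < m) :
    asapSchedule I E S i = asapFlow E I.p S i :=
  if_pos hi

theorem asapSchedule_of_not_lt {i : Fin m} (hi : ¬ i.val + 1 < m) :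
    asapSchedule I E S i = S i :=
  if_neg hi

theorem asapSchedule_le (hS : IsJITSchedule I E S) (i : Fin m) {j : J} (hj : j ∈ E) :
    asapSchedule I E S i j ≤ S i j := by
  by_cases hi : i.val + 1 < m
  · rw [asapSchedule_of_lt hi]
    exact asapFlow_le hS.2.1 (fun i j hj j' hj' => hS.add_le_of_lt i hj' hj) i hj
  · rw [asapSchedule_of_not_lt hi]

theorem asapSchedule_add_le_of_lt (hS : IsJITSchedule I E S) (i : Fin m) {j j' : J}
    (hj : j ∈ E) (hj' : j' ∈ E) (hlt : S i j < S i j') :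
    asapSchedule I E S i j + I.p i j ≤ asapSchedule I E S i j' := by
  by_cases hi : i.val + 1 < m
  · rw [asapSchedule_of_lt hi]
    exact asapFlow_add_le_asapFlow i hj hlt
  · rw [asapSchedule_of_not_lt hi]
    exact hS.add_le_of_lt i hj hj' hlt

theorem asapSchedule_lt_asapSchedule_iff (hS : IsJITSchedule I E S) (i : Fin m) {j j' : J}
    (hj : j ∈ E) (hj' : j' ∈ E) :
    asapSchedule I E S i j < asapSchedule I E S i j' ↔ S i j < S i j' := by
  refine ⟨fun hlt => ?_, fun hlt => (Nat.lt_add_of_pos_right (I.p_pos i j)).trans_le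
    (asapSchedule_add_le_of_lt hS i hj hj' hlt)⟩
  rcases lt_trichotomy (S i j) (S i j') with h | h | h
  · exact h
  · rw [hS.injOn i hj hj' h] at hlt
    exact (lt_irrefl _ hlt).elim
  · have := asapSchedule_add_le_of_lt hS i hj' hj h
    omega

theorem isJITSchedule_asapSchedule (hS : IsJITSchedule I E S) :
    IsJITSchedule I E (asapSchedule I E S) := by
  refine ⟨fun i j hj j' hj' hne => ?_, fun j hj i i' hi' => ?_, fun j hj i hi => ?_⟩
  · rcases ((hS.injOn i).ne hj hj' hne).lt_or_gt with hlt | hlt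
    · exact Or.inl (asapSchedule_add_le_of_lt hS i hj hj' hlt)
    · exact Or.inr (asapSchedule_add_le_of_lt hS i hj' hj hlt)
  · by_cases hi'm : i'.val + 1 < m
    · rw [asapSchedule_of_lt hi'm, asapSchedule_of_lt (by omega)]
      exact asapFlow_add_le_asapFlow_succ hi' j
    · rw [asapSchedule_of_not_lt hi'm]
      exact (Nat.add_le_add_right (asapSchedule_le hS i hj) _).trans (hS.2.1 j hj i i' hi')
  · rw [asapSchedule_of_not_lt (by omega)]
    exact hS.2.2 j hj i hi

theorem asapSchedule_eq (hS : IsJITSchedule I E S) {i : Fin m} (hi : i.val + 1 < m) {j : J}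
    (hj : j ∈ E) :
    asapSchedule I E S i j =
      max
        (if i.val = 0 then 0
         else asapSchedule I E S ⟨i.val - 1, lt_of_le_of_lt (Nat.sub_le _ _) i.isLt⟩ j
              + I.p ⟨i.val - 1, lt_of_le_of_lt (Nat.sub_le _ _) i.isLt⟩ j)
        ((E.filter (fun j' => asapSchedule I E S i j' < asapSchedule I E S i j)).sup
          (fun j' => asapSchedule I E S i j' + I.p i j')) := by
  have hprev : (i.val - 1) + 1 < m := by omega
  rw [filter_congr fun j' hj' => asapSchedule_lt_asapSchedule_iff hS i hj' hj,
    asapSchedule_of_lt hi, asapSchedule_of_lt hprev, asapFlow_eq]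

end JIT

theorem jit_exists_asap_schedule {m : ℕ} {J : Type}
    (I : JITInstance m J) (E : Finset J) (S : Fin m → J → ℕ)
    (hS : IsJITSchedule I E S) :
    ∃ S' : Fin m → J → ℕ, IsJITSchedule I E S' ∧
      (∀ i : Fin m, ∀ j ∈ E, ∀ j' ∈ E, (S' i j < S' i j' ↔ S i j < S i j')) ∧
      (∀ j ∈ E, ∀ i : Fin m, i.val + 1 < m →
        S' i j =
          max
            (if i.val = 0 then 0
             else S' ⟨i.val - 1, lt_of_le_of_lt (Nat.sub_le _ _) i.isLt⟩ j
                  + I.p ⟨i.val - 1, lt_of_le_of_lt (Nat.sub_le _ _) i.isLt⟩ j)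
            ((E.filter (fun j' => S' i j' < S' i j)).sup
              (fun j' => S' i j' + I.p i j'))) :=
  ⟨asapSchedule I E S, isJITSchedule_asapSchedule hS,
    fun i _ hj _ hj' => asapSchedule_lt_asapSchedule_iff hS i hj hj',
    fun _ hj _ hi => asapSchedule_eq hS hi hj⟩
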